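/- arXiv:2104.11179 — 3 statements merged into one kernel-verified Lean document; each statement's English description precedes it below -/
import Mathlib

section
/- For any S ⊆ E × ℝ₊₊ and any (y,v) ∈ ΓS, letting (x,u) = Γ(y,v), the proximal normal cone of ΓS at (y,v) is N^P_{ΓS}((y,v)) = {(ζ, −(⟨ζ,x⟩ + δu)) : (ζ,δ) ∈ N^P_S((x,u))}. -/
/-!
For `p = (x, u)`, `q = (a, b)` and `w = (ζ, δ)`, the vector `w' = (ζ, -(⟪ζ, x⟫ + δ u))` satisfies
`⟪w', Γq - Γp⟫ = b⁻¹ ⟪w, q - p⟫`. Proximal normality of `w` is the inequality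
`2 ε ⟪w, q - p⟫ ≤ ‖q - p‖²` on `S` for some `ε > 0`, and it only has to be checked near `p`.
Near `Γp` the factor `b⁻¹` is bounded and `Γ` is Lipschitz, so `Γ` being an involution turns
the inequality for `w` on `S` into one for `w'` on `ΓS`. Applied to `S` and to `ΓS`
(whose image is `S` again), this gives both inclusions, because `w ↦ w'` at `p` is inverted by
the same map at `Γp`.
-/

open Set
open scoped ENNReal RealInnerProductSpace

noncomputable section

variable {E : Type*} [NormedAddCommGroup E] [InnerProductSpace ℝ E] [FiniteDimensional ℝ E]

/-- The radial point transformation `Γ(x,u) = (x/u, 1/u)`. -/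
def radialPoint (p : E × ℝ) : E × ℝ := (p.2⁻¹ • p.1, p.2⁻¹)

/-- The radial set transformation `ΓS = {Γ(x,u) : (x,u) ∈ S}`. -/
def radialSet (S : Set (E × ℝ)) : Set (E × ℝ) := radialPoint '' S

/-- The Euclidean inner product on `E × ℝ`. -/
def iprod (p q : E × ℝ) : ℝ := ⟪p.1, q.1⟫ + p.2 * q.2

/-- Squared Euclidean distance on `E × ℝ`. -/
def sqDist (p q : E × ℝ) : ℝ := ‖p.1 - q.1‖ ^ 2 + (p.2 - q.2) ^ 2

/-- The proximal normal cone of `S` at `p`: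
`{w : p is a (Euclidean) nearest point of S to p + εw for some ε > 0}`. -/
def normalConeP (S : Set (E × ℝ)) (p : E × ℝ) : Set (E × ℝ) :=
  {w : E × ℝ | ∃ ε : ℝ, 0 < ε ∧ ∀ q ∈ S, sqDist (p + ε • w) p ≤ sqDist (p + ε • w) q}

open Filter Topology

section

variable {F : Type*} [NormedAddCommGroup F]

lemma sqDist_nonneg (p q : F × ℝ) : 0 ≤ sqDist p q := by
  unfold sqDist; positivity

lemma sqDist_eq_dist_sq_add_dist_sq (p q : F × ℝ) :
    sqDist p q = dist p.1 q.1 ^ 2 + dist p.2 q.2 ^ 2 := by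
  rw [sqDist, dist_eq_norm, Real.dist_eq, sq_abs]

lemma dist_sq_le_sqDist (p q : F × ℝ) : dist p q ^ 2 ≤ sqDist p q := by
  rw [Prod.dist_eq, sqDist_eq_dist_sq_add_dist_sq]
  rcases max_cases (dist p.1 q.1) (dist p.2 q.2) with ⟨h, -⟩ | ⟨h, -⟩ <;> rw [h] <;>
    nlinarith [sq_nonneg (dist p.1 q.1), sq_nonneg (dist p.2 q.2)]

lemma sqDist_le_two_mul_dist_sq (p q : F × ℝ) : sqDist p q ≤ 2 * dist p q ^ 2 := by
  rw [Prod.dist_eq, sqDist_eq_dist_sq_add_dist_sq]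
  have h₁ := le_max_left (dist p.1 q.1) (dist p.2 q.2)
  have h₂ := le_max_right (dist p.1 q.1) (dist p.2 q.2)
  nlinarith [dist_nonneg (x := p.1) (y := q.1), dist_nonneg (x := p.2) (y := q.2)]

variable [InnerProductSpace ℝ F]

lemma sqDist_add_smul (p q w : F × ℝ) (ε : ℝ) :
    sqDist (p + ε • w) q = sqDist (p + ε • w) p + sqDist q p - 2 * ε * iprod w (q - p) := by
  have h₁ : (p + ε • w).1 - q.1 = ε • w.1 - (q.1 - p.1) := by
    simp only [Prod.fst_add, Prod.smul_fst]; abel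
  have h₂ : (p + ε • w).1 - p.1 = ε • w.1 := by simp
  simp only [sqDist, iprod, h₁, h₂, norm_sub_sq_real, real_inner_smul_left, Prod.fst_sub,
    Prod.snd_sub, Prod.snd_add, Prod.smul_snd, smul_eq_mul, norm_sub_rev q.1 p.1]
  ring

lemma mem_normalConeP_iff {S : Set (F × ℝ)} {p w : F × ℝ} :
    w ∈ normalConeP S p ↔ ∃ ε > 0, ∀ q ∈ S, 2 * ε * iprod w (q - p) ≤ sqDist q p := by
  refine exists_congr fun ε => and_congr_right fun _ => forall₂_congr fun q _ => ?_
  rw [sqDist_add_smul p q w ε]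
  constructor <;> intro h <;> linarith

lemma iprod_le_two_mul_norm_mul_norm (w d : F × ℝ) : iprod w d ≤ 2 * ‖w‖ * ‖d‖ := by
  have h₁ : ⟪w.1, d.1⟫ ≤ ‖w‖ * ‖d‖ :=
    (real_inner_le_norm _ _).trans (mul_le_mul (norm_fst_le w) (norm_fst_le d) (norm_nonneg _)
      (norm_nonneg _))
  have h₂ : w.2 * d.2 ≤ ‖w‖ * ‖d‖ :=
    (le_abs_self _).trans <| (abs_mul _ _).trans_le <|
      mul_le_mul (norm_snd_le w) (norm_snd_le d) (abs_nonneg _) (norm_nonneg _)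
  rw [iprod]; linarith

/-- Far from `p` the pairing grows only linearly while `sqDist` grows quadratically. -/
lemma mem_normalConeP_of_eventually {S : Set (F × ℝ)} {p w : F × ℝ} {ε : ℝ} (hε : 0 < ε)
    (h : ∀ᶠ q in 𝓝 p, q ∈ S → 2 * ε * iprod w (q - p) ≤ sqDist q p) :
    w ∈ normalConeP S p := by
  obtain ⟨r, hr, hnear⟩ := Metric.eventually_nhds_iff.1 h
  set ε' := min ε (r / (4 * ‖w‖ + 1))
  have hε' : 0 < ε' := by positivity
  have hε'r : 4 * ε' * ‖w‖ ≤ r := by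
    have : ε' * (4 * ‖w‖ + 1) ≤ r := (le_div_iff₀ (by positivity)).1 (min_le_right ε _)
    nlinarith [norm_nonneg w]
  refine mem_normalConeP_iff.2 ⟨ε', hε', fun q hq => ?_⟩
  rcases lt_or_ge (dist q p) r with hqr | hqr
  · have hS := hnear hqr hq
    rcases le_total 0 (iprod w (q - p)) with hi | hi
    · nlinarith [min_le_left ε (r / (4 * ‖w‖ + 1))]
    · nlinarith [sqDist_nonneg q p]
  · have hd : 0 ≤ dist q p := dist_nonneg
    calc 2 * ε' * iprod w (q - p) ≤ 2 * ε' * (2 * ‖w‖ * dist q p) := by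
          rw [dist_eq_norm]
          exact mul_le_mul_of_nonneg_left (iprod_le_two_mul_norm_mul_norm _ _) (by positivity)
      _ ≤ r * dist q p := by nlinarith
      _ ≤ dist q p ^ 2 := by nlinarith
      _ ≤ sqDist q p := dist_sq_le_sqDist q p

lemma mem_normalConeP_of_eventually_exists {S S' : Set (F × ℝ)} {p p' w w' : F × ℝ}
    (hw : w ∈ normalConeP S p) {C : ℝ} (hC : 0 ≤ C)
    (h : ∀ᶠ q' in 𝓝 p', q' ∈ S' → ∃ q ∈ S, ∃ c, 0 ≤ c ∧
      iprod w' (q' - p') = c * iprod w (q - p) ∧ c * sqDist q p ≤ C * sqDist q' p') :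
    w' ∈ normalConeP S' p' := by
  obtain ⟨ε, hε, hS⟩ := mem_normalConeP_iff.1 hw
  refine mem_normalConeP_of_eventually (ε := ε / (C + 1)) (by positivity) ?_
  filter_upwards [h] with q' hq' hq'S
  obtain ⟨q, hq, c, hc, hpair, hdist⟩ := hq' hq'S
  have hC1 : C / (C + 1) ≤ 1 := (div_le_one (by positivity)).2 (by linarith)
  calc 2 * (ε / (C + 1)) * iprod w' (q' - p')
      = c / (C + 1) * (2 * ε * iprod w (q - p)) := by rw [hpair]; field_simp
    _ ≤ c / (C + 1) * sqDist q p := mul_le_mul_of_nonneg_left (hS q hq) (by positivity)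
    _ ≤ C / (C + 1) * sqDist q' p' := by
        rw [div_mul_eq_mul_div, div_mul_eq_mul_div]
        exact div_le_div_of_nonneg_right hdist (by positivity)
    _ ≤ sqDist q' p' := mul_le_of_le_one_left (sqDist_nonneg q' p') hC1

def radialNormal (p w : F × ℝ) : F × ℝ := (w.1, -(⟪w.1, p.1⟫ + w.2 * p.2))

lemma radialPoint_radialPoint {p : F × ℝ} (hp : p.2 ≠ 0) : radialPoint (radialPoint p) = p := by
  simp [radialPoint, smul_smul, mul_inv_cancel₀ hp]

lemma radialSet_radialSet {S : Set (F × ℝ)} (hS : ∀ p ∈ S, 0 < p.2) :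
    radialSet (radialSet S) = S := by
  rw [radialSet, radialSet, image_image,
    image_congr fun p hp => radialPoint_radialPoint (hS p hp).ne', image_id']

lemma snd_pos_of_mem_radialSet {S : Set (F × ℝ)} (hS : ∀ p ∈ S, 0 < p.2) :
    ∀ p ∈ radialSet S, 0 < p.2 := by
  rintro _ ⟨q, hq, rfl⟩
  exact inv_pos.2 (hS q hq)

lemma radialNormal_radialNormal {p : F × ℝ} (hp : p.2 ≠ 0) (w : F × ℝ) :
    radialNormal (radialPoint p) (radialNormal p w) = w := by
  simp only [radialNormal, radialPoint, real_inner_smul_right]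
  ext
  · rfl
  · field_simp; ring

lemma iprod_radialNormal_radialPoint_sub {p q : F × ℝ} (hp : p.2 ≠ 0) (hq : q.2 ≠ 0)
    (w : F × ℝ) :
    iprod (radialNormal p w) (radialPoint q - radialPoint p) = q.2⁻¹ * iprod w (q - p) := by
  simp only [radialNormal, radialPoint, iprod, Prod.fst_sub, Prod.snd_sub, inner_sub_right,
    real_inner_smul_right]
  field_simp
  ring

lemma exists_eventually_sqDist_radialPoint_le {p : F × ℝ} (hp : p.2 ≠ 0) :
    ∃ C, 0 ≤ C ∧ ∀ᶠ q in 𝓝 p, sqDist (radialPoint q) (radialPoint p) ≤ C * sqDist q p := by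
  have hinv : ContDiffAt ℝ 1 (fun q : F × ℝ => q.2⁻¹) p := contDiffAt_snd.inv hp
  obtain ⟨K, t, ht, hK⟩ := ((hinv.smul contDiffAt_fst).prodMk hinv).exists_lipschitzOnWith
  refine ⟨2 * K ^ 2, by positivity, ?_⟩
  filter_upwards [ht] with q hq
  have hdist : dist (radialPoint q) (radialPoint p) ≤ K * dist q p :=
    hK.dist_le_mul q hq p (mem_of_mem_nhds ht)
  calc sqDist (radialPoint q) (radialPoint p)
      ≤ 2 * dist (radialPoint q) (radialPoint p) ^ 2 := sqDist_le_two_mul_dist_sq _ _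
    _ ≤ 2 * (K * dist q p) ^ 2 := by gcongr
    _ ≤ 2 * K ^ 2 * sqDist q p := by
        rw [mul_pow, ← mul_assoc]
        exact mul_le_mul_of_nonneg_left (dist_sq_le_sqDist q p) (by positivity)

theorem radialNormal_mem_normalConeP_radialSet {S : Set (F × ℝ)} (hS : ∀ p ∈ S, 0 < p.2)
    {p w : F × ℝ} (hp : 0 < p.2) (hw : w ∈ normalConeP S p) :
    radialNormal p w ∈ normalConeP (radialSet S) (radialPoint p) := by
  have hp' : (radialPoint p).2 ≠ 0 := inv_ne_zero hp.ne'
  obtain ⟨C, hC, hlip⟩ := exists_eventually_sqDist_radialPoint_le hp'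
  have hbound : ∀ᶠ q' in 𝓝 (radialPoint p), q'.2 < 2 * p.2⁻¹ :=
    continuous_snd.continuousAt.eventually_lt continuousAt_const
      (by show p.2⁻¹ < 2 * p.2⁻¹; linarith [inv_pos.2 hp])
  refine mem_normalConeP_of_eventually_exists hw (C := 2 * p.2⁻¹ * C) (by positivity) ?_
  filter_upwards [hlip, hbound]
  rintro _ hlip' hbound' ⟨q, hq, rfl⟩
  have hq0 := hS q hq
  rw [radialPoint_radialPoint hq0.ne', radialPoint_radialPoint hp.ne'] at hlip'
  refine ⟨q, hq, q.2⁻¹, inv_nonneg.2 hq0.le,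
    iprod_radialNormal_radialPoint_sub hp.ne' hq0.ne' w, ?_⟩
  rw [mul_assoc]
  exact mul_le_mul hbound'.le hlip' (sqDist_nonneg q p) (by positivity)

end

/-- Proximal normal vectors under the radial set transformation: for `(y,v) ∈ ΓS` and
`(x,u) = Γ(y,v)`, `N^P_{ΓS}((y,v)) = {(ζ, −(⟨ζ,x⟩ + δu)) : (ζ,δ) ∈ N^P_S((x,u))}`. -/
theorem radialSet_proximal_normals (S : Set (E × ℝ)) (hpos : ∀ p ∈ S, 0 < p.2)
    (y : E) (v : ℝ) (hyv : (y, v) ∈ radialSet S) :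
    normalConeP (radialSet S) (y, v) =
      {w : E × ℝ | ∃ ζ : E, ∃ δ : ℝ,
        (ζ, δ) ∈ normalConeP S (v⁻¹ • y, v⁻¹) ∧
        w = (ζ, -(⟪ζ, v⁻¹ • y⟫ + δ * v⁻¹))} := by
  have hv : 0 < v := snd_pos_of_mem_radialSet hpos _ hyv
  have hΓΓ : radialPoint (v⁻¹ • y, v⁻¹) = (y, v) := radialPoint_radialPoint (p := (y, v)) hv.ne'
  ext w
  constructor
  · intro hw
    have h := radialNormal_mem_normalConeP_radialSet (snd_pos_of_mem_radialSet hpos) hv hw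
    rw [radialSet_radialSet hpos] at h
    exact ⟨_, _, h, (radialNormal_radialNormal (p := (y, v)) hv.ne' w).symm⟩
  · rintro ⟨ζ, δ, h, rfl⟩
    have h' := radialNormal_mem_normalConeP_radialSet hpos (inv_pos.2 hv) h
    rwa [hΓΓ] at h'
end
end

section
/- An upper semicontinuous f : E → [0,∞] is upper radial if and only if every (x,u) ∈ hypo f and every (ζ,δ) ∈ N^P_{hypo f}((x,u)) satisfy ⟨ζ,x⟩ + δu ≥ 0. Likewise, a lower semicontinuous f is lower radial if and only if every (x,u) ∈ epi f and every (ζ,δ) ∈ N^P_{epi f}((x,u)) satisfy ⟨ζ,x⟩ + δu ≤ 0. -/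
open Set
open scoped ENNReal RealInnerProductSpace

noncomputable section

variable {E : Type*} [NormedAddCommGroup E] [InnerProductSpace ℝ E] [FiniteDimensional ℝ E]

/-- The perspective function `f^p(y,v) = v·f(y/v)` (for `v > 0`). -/
def persp (f : E → ℝ≥0∞) (y : E) (v : ℝ) : ℝ≥0∞ := ENNReal.ofReal v * f (v⁻¹ • y)

/-- The epigraph `epi f = {(x,u) ∈ E × ℝ₊₊ : f(x) ≤ u}`. -/
def epiSet (f : E → ℝ≥0∞) : Set (E × ℝ) :=
  {p : E × ℝ | 0 < p.2 ∧ f p.1 ≤ ENNReal.ofReal p.2}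

/-- The hypograph `hypo f = {(x,u) ∈ E × ℝ₊₊ : f(x) ≥ u}`. -/
def hypoSet (f : E → ℝ≥0∞) : Set (E × ℝ) :=
  {p : E × ℝ | 0 < p.2 ∧ ENNReal.ofReal p.2 ≤ f p.1}

/-- `f` is upper radial: every `f^p(y,·)` is nondecreasing and upper semicontinuous on `ℝ₊₊`. -/
def UpperRadial (f : E → ℝ≥0∞) : Prop :=
  ∀ y : E, MonotoneOn (persp f y) (Ioi (0 : ℝ)) ∧
    UpperSemicontinuousOn (persp f y) (Ioi (0 : ℝ))

/-- `f` is lower radial: every `f^p(y,·)` is nondecreasing and lower semicontinuous on `ℝ₊₊`. -/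
def LowerRadial (f : E → ℝ≥0∞) : Prop :=
  ∀ y : E, MonotoneOn (persp f y) (Ioi (0 : ℝ)) ∧
    LowerSemicontinuousOn (persp f y) (Ioi (0 : ℝ))

/-!
For `v > 0` and `c > 0`, `f^p(y, v) ≥ c` iff `v⁻¹ • (y, c) ∈ hypo f` (and `f^p(y, v) ≤ c` iff
`v⁻¹ • (y, c) ∈ epi f`). Hence monotonicity of the perspective in `v` says exactly that `hypo f` is
invariant under the scalings `t ∈ (0, 1]` (that `epi f` is invariant under `t ≥ 1`), and closedness
of the set gives the semicontinuity half of radiality for free.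

An invariant set satisfies the sign condition at every proximal normal `w` at `p`: test the
nearest-point property of `p + ε • w` against the points `(1 ± s) • p` and let `s → 0`.
Conversely, walk from `p` to `t • p` in `n` Euler steps, each time stepping away from a nearest
point `z` to the current point `s • p`. Since `s • p - z` is a proximal normal at `z`, the sign
condition makes the squared distance from `p` to `s⁻¹ • z` grow by `O(1 / n²)` per step, so
`t • p` lies in the closure of the set, hence in the set.
-/

open Filter Topology

section

variable {F : Type*} [NormedAddCommGroup F]

lemma continuous_sqDist (q : F × ℝ) : Continuous (sqDist q) := by
  unfold sqDist
  fun_prop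

lemma mem_closure_of_forall_sqDist_lt {S : Set (F × ℝ)} {q : F × ℝ}
    (h : ∀ ε > 0, ∃ z ∈ S, sqDist q z < ε) : q ∈ closure S := by
  refine Metric.mem_closure_iff.2 fun ε hε => ?_
  obtain ⟨z, hzS, hz⟩ := h (ε ^ 2) (by positivity)
  exact ⟨z, hzS, (pow_lt_pow_iff_left₀ dist_nonneg hε.le two_ne_zero).1
    ((dist_sq_le_sqDist q z).trans_lt hz)⟩

/-- The bound `sqDist q z₀ < q.2 ^ 2` keeps all competitors in the half-space `0 < z.2`,
where `S` is closed. -/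
lemma exists_isMinOn_sqDist [ProperSpace F] {S : Set (F × ℝ)}
    (hS : ∀ p ∈ closure S, 0 < p.2 → p ∈ S) {q z₀ : F × ℝ} (hq : 0 < q.2) (hz₀ : z₀ ∈ S)
    (hqz₀ : sqDist q z₀ < q.2 ^ 2) : ∃ z ∈ S, IsMinOn (sqDist q) S z := by
  set K := closure S ∩ {z | sqDist q z ≤ sqDist q z₀}
  have hK : IsCompact K := by
    refine (isCompact_closedBall q √(sqDist q z₀)).of_isClosed_subset
      (isClosed_closure.inter (isClosed_le (continuous_sqDist q) continuous_const))
      fun z hz => ?_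
    rw [Metric.mem_closedBall, dist_comm, Real.le_sqrt dist_nonneg (sqDist_nonneg q z₀)]
    exact (dist_sq_le_sqDist q z).trans hz.2
  obtain ⟨z, ⟨hz, hzz₀⟩, hmin⟩ :=
    hK.exists_isMinOn ⟨z₀, subset_closure hz₀, show sqDist q z₀ ≤ sqDist q z₀ from le_rfl⟩
      (continuous_sqDist q).continuousOn
  have hz2 : 0 < z.2 := by
    have : (q.2 - z.2) ^ 2 ≤ sqDist q z₀ := by
      have : sqDist q z ≤ sqDist q z₀ := hzz₀
      unfold sqDist at this ⊢
      nlinarith [sq_nonneg ‖q.1 - z.1‖]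
    nlinarith
  refine ⟨z, hS z hz hz2, isMinOn_iff.2 fun z' hz' => ?_⟩
  by_cases h : sqDist q z' ≤ sqDist q z₀
  · exact hmin ⟨subset_closure hz', h⟩
  · exact hzz₀.trans (le_of_not_ge h)

lemma eventually_notMem_nhds {X : Type*} [TopologicalSpace X] {S : Set (X × ℝ)}
    (hS : ∀ p ∈ closure S, 0 < p.2 → p ∈ S) {q : X × ℝ} (hq : 0 < q.2) (hqS : q ∉ S) :
    ∀ᶠ z in 𝓝 q, z ∉ S :=
  mem_of_superset (isClosed_closure.isOpen_compl.mem_nhds fun h => hqS (hS q h hq))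
    fun _ hz h => hz (subset_closure h)

variable [InnerProductSpace ℝ F]

lemma iprod_comm (p q : F × ℝ) : iprod p q = iprod q p := by
  simp only [iprod, real_inner_comm, mul_comm]

lemma iprod_add_right (p q r : F × ℝ) : iprod p (q + r) = iprod p q + iprod p r := by
  simp only [iprod, Prod.fst_add, Prod.snd_add, inner_add_right]
  ring

lemma iprod_smul_right (c : ℝ) (p q : F × ℝ) : iprod p (c • q) = c * iprod p q := by
  simp only [iprod, Prod.smul_fst, Prod.smul_snd, real_inner_smul_right, smul_eq_mul]
  ring

lemma iprod_neg_right (p q : F × ℝ) : iprod p (-q) = -iprod p q := by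
  simpa using iprod_smul_right (-1) p q

lemma iprod_add_left (p q r : F × ℝ) : iprod (p + q) r = iprod p r + iprod q r := by
  rw [iprod_comm, iprod_add_right, iprod_comm r, iprod_comm r]

lemma iprod_smul_left (c : ℝ) (p q : F × ℝ) : iprod (c • p) q = c * iprod p q := by
  rw [iprod_comm, iprod_smul_right, iprod_comm]

lemma iprod_self_nonneg (p : F × ℝ) : 0 ≤ iprod p p := by
  simp only [iprod, real_inner_self_eq_norm_sq]
  exact add_nonneg (sq_nonneg _) (mul_self_nonneg _)

lemma sqDist_eq_iprod (p q : F × ℝ) : sqDist p q = iprod (p - q) (p - q) := by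
  simp only [sqDist, iprod, Prod.fst_sub, Prod.snd_sub, real_inner_self_eq_norm_sq]
  ring

lemma sub_mem_normalConeP {S : Set (F × ℝ)} {q z : F × ℝ} (hz : IsMinOn (sqDist q) S z) :
    q - z ∈ normalConeP S z :=
  ⟨1, one_pos, fun z' hz' => by simpa using isMinOn_iff.1 hz z' hz'⟩

lemma iprod_nonpos_of_add_smul_mem {S : Set (F × ℝ)} {p v w : F × ℝ}
    (hw : w ∈ normalConeP S p) (hv : ∀ s ∈ Ioo (0 : ℝ) 1, p + s • v ∈ S) : iprod w v ≤ 0 := by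
  obtain ⟨ε, hε, hmin⟩ := hw
  have key : ∀ s ∈ Ioo (0 : ℝ) 1, 2 * ε * iprod w v ≤ s * iprod v v := by
    intro s hs
    have h := hmin _ (hv s hs)
    have e : p + ε • w - (p + s • v) = ε • w + (-s) • v := by
      rw [neg_smul]
      abel
    rw [sqDist_eq_iprod, sqDist_eq_iprod, add_sub_cancel_left, e] at h
    simp only [iprod_add_left, iprod_add_right, iprod_smul_left, iprod_smul_right,
      iprod_comm v w] at h
    nlinarith [hs.1]
  have hlim : Tendsto (fun s : ℝ => s * iprod v v) (𝓝[>] 0) (𝓝 0) :=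
    ((continuous_id.mul continuous_const).tendsto' 0 0 (zero_mul _)).mono_left
      nhdsWithin_le_nhds
  have := ge_of_tendsto hlim (eventually_of_mem (Ioo_mem_nhdsGT one_pos) key)
  nlinarith

/-- `sqDist (s • p) z / s ^ 2` is the squared distance from `p` to `s⁻¹ • z`; measured this way,
moving along the ray away from `z` costs only a second-order term, so no Gronwall factor appears. -/
lemma sqDist_add_smul_div_sq_le {p z : F × ℝ} {s h : ℝ} (hs : 0 < s) (hsh : 0 < s + h)
    (hz : h * iprod (s • p - z) z ≤ 0) :
    sqDist ((s + h) • p) z / (s + h) ^ 2 ≤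
      sqDist (s • p) z / s ^ 2 + (h / (s + h)) ^ 2 * iprod p p := by
  set w := s • p - z
  have hstep : (s + h) • p - z = w + h • p := by
    simp only [w, add_smul]
    abel
  have hwp : s * iprod w p = iprod w w + iprod w z := by
    rw [← iprod_smul_right, ← iprod_add_right, sub_add_cancel]
  rw [sqDist_eq_iprod, sqDist_eq_iprod, hstep]
  simp only [iprod_add_left, iprod_add_right, iprod_smul_left, iprod_smul_right, iprod_comm p w]
  have hD := iprod_self_nonneg w
  have hN := iprod_self_nonneg p
  field_simp
  nlinarith [mul_nonneg (sq_nonneg h) hD, mul_nonpos_of_nonneg_of_nonpos hs.le hz]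

lemma exists_sqDist_add_smul_div_sq_le [ProperSpace F] {S : Set (F × ℝ)}
    (hS : ∀ p ∈ closure S, 0 < p.2 → p ∈ S) {h : ℝ}
    (hN : ∀ z ∈ S, ∀ w ∈ normalConeP S z, h * iprod w z ≤ 0) {p z : F × ℝ} {s : ℝ}
    (hs : 0 < s) (hsh : 0 < s + h) (hp : 0 < p.2) (hz : z ∈ S)
    (hsz : sqDist (s • p) z / s ^ 2 < p.2 ^ 2) :
    ∃ z' ∈ S, sqDist ((s + h) • p) z' / (s + h) ^ 2 ≤
      sqDist (s • p) z / s ^ 2 + (h / (s + h)) ^ 2 * iprod p p := by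
  have hsp : 0 < (s • p).2 := by simpa using mul_pos hs hp
  obtain ⟨z', hz'S, hmin⟩ := exists_isMinOn_sqDist hS hsp hz <| by
    rw [div_lt_iff₀ (by positivity)] at hsz
    simpa [mul_pow, mul_comm] using hsz
  refine ⟨z', hz'S, (sqDist_add_smul_div_sq_le hs hsh
    (hN z' hz'S _ (sub_mem_normalConeP hmin))).trans ?_⟩
  gcongr
  exact isMinOn_iff.1 hmin z hz

lemma exists_sqDist_smul_div_sq_le [ProperSpace F] {S : Set (F × ℝ)}
    (hS : ∀ p ∈ closure S, 0 < p.2 → p ∈ S) {h a : ℝ}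
    (hN : ∀ z ∈ S, ∀ w ∈ normalConeP S z, h * iprod w z ≤ 0) {p : F × ℝ} (hpS : p ∈ S)
    (hp : 0 < p.2) (ha : 0 < a) (n : ℕ) (hscale : ∀ k ≤ n, a ≤ 1 + k * h)
    (hsmall : n * ((h / a) ^ 2 * iprod p p) < p.2 ^ 2) :
    ∃ z ∈ S, sqDist ((1 + n * h) • p) z / (1 + n * h) ^ 2 ≤ n * ((h / a) ^ 2 * iprod p p) := by
  have hC : 0 ≤ (h / a) ^ 2 * iprod p p := mul_nonneg (sq_nonneg _) (iprod_self_nonneg p)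
  induction n with
  | zero => exact ⟨p, hpS, by simp [sqDist]⟩
  | succ n ih =>
    push_cast at hscale hsmall ⊢
    obtain ⟨z, hzS, hz⟩ := ih (fun k hk => hscale k (by omega)) (by linarith)
    have hs := hscale n (by omega)
    have hsh : a ≤ 1 + n * h + h := by
      have := hscale (n + 1) le_rfl
      push_cast at this
      linarith
    obtain ⟨z', hz'S, hz'⟩ := exists_sqDist_add_smul_div_sq_le hS hN (ha.trans_le hs)
      (ha.trans_le hsh) hp hzS (by linarith)
    have hstep : (h / (1 + n * h + h)) ^ 2 ≤ (h / a) ^ 2 := by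
      rw [div_pow, div_pow]
      gcongr
    refine ⟨z', hz'S, ?_⟩
    rw [show 1 + (n + 1) * h = 1 + n * h + h by ring]
    nlinarith [mul_le_mul_of_nonneg_right hstep (iprod_self_nonneg p)]

lemma smul_mem_of_forall_normalConeP [ProperSpace F] {S : Set (F × ℝ)}
    (hS : ∀ p ∈ closure S, 0 < p.2 → p ∈ S) {t : ℝ} (ht : 0 < t)
    (hN : ∀ z ∈ S, ∀ w ∈ normalConeP S z, (t - 1) * iprod w z ≤ 0) {p : F × ℝ} (hpS : p ∈ S)
    (hp : 0 < p.2) : t • p ∈ S := by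
  set a := min t 1
  have ha : 0 < a := lt_min ht one_pos
  set C := ((t - 1) / a) ^ 2 * iprod p p
  have hC : 0 ≤ C := mul_nonneg (sq_nonneg _) (iprod_self_nonneg p)
  refine hS _ (mem_closure_of_forall_sqDist_lt fun ε hε => ?_) (by simpa using mul_pos ht hp)
  obtain ⟨n, hn⟩ := exists_nat_gt (max (C / p.2 ^ 2) (t ^ 2 * C / ε))
  have hn0 : (0 : ℝ) < n := (le_max_left _ _).trans_lt hn |>.trans_le' (by positivity)
  have hCn : n * (((t - 1) / n / a) ^ 2 * iprod p p) = C / n := by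
    simp only [C]
    field_simp
  have hscale : ∀ k ≤ n, a ≤ 1 + k * ((t - 1) / n) := by
    intro k hk
    have hθ : (k : ℝ) / n ≤ 1 := (div_le_one hn0).2 (by exact_mod_cast hk)
    have hθ0 : (0 : ℝ) ≤ k / n := by positivity
    rw [show (k : ℝ) * ((t - 1) / n) = k / n * (t - 1) by ring]
    nlinarith [mul_nonneg (sub_nonneg.2 hθ) (sub_nonneg.2 (min_le_right t 1)),
      mul_nonneg hθ0 (sub_nonneg.2 (min_le_left t 1))]
  obtain ⟨z, hzS, hz⟩ := exists_sqDist_smul_div_sq_le hS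
    (fun z hz w hw => by simpa [div_mul_eq_mul_div] using
      div_nonpos_of_nonpos_of_nonneg (hN z hz w hw) hn0.le) hpS hp ha n hscale <| by
    rw [hCn, div_lt_iff₀ hn0]
    rw [max_lt_iff, div_lt_iff₀ (by positivity)] at hn
    nlinarith
  rw [hCn, show 1 + n * ((t - 1) / n) = t by field_simp; ring, div_le_iff₀ (by positivity)] at hz
  refine ⟨z, hzS, hz.trans_lt ?_⟩
  rw [max_lt_iff, div_lt_iff₀ hε] at hn
  rw [div_mul_eq_mul_div, div_lt_iff₀ hn0]
  nlinarith

lemma forall_smul_mem_Ioc_iff [ProperSpace F] {S : Set (F × ℝ)}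
    (hS : ∀ p ∈ closure S, 0 < p.2 → p ∈ S) (hpos : ∀ p ∈ S, 0 < p.2) :
    (∀ p ∈ S, ∀ t ∈ Ioc (0 : ℝ) 1, t • p ∈ S) ↔
      ∀ p ∈ S, ∀ w ∈ normalConeP S p, 0 ≤ iprod w p := by
  refine ⟨fun h p hp w hw => ?_, fun h p hp t ht => ?_⟩
  · have := iprod_nonpos_of_add_smul_mem (v := -p) hw fun s hs => by
      rw [show p + s • -p = (1 - s) • p by rw [smul_neg, sub_smul, one_smul, sub_eq_add_neg]]
      exact h p hp (1 - s) ⟨by linarith [hs.2], by linarith [hs.1]⟩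
    rw [iprod_neg_right] at this
    linarith
  · exact smul_mem_of_forall_normalConeP hS ht.1
      (fun z hz w hw => mul_nonpos_of_nonpos_of_nonneg (by linarith [ht.2]) (h z hz w hw)) hp
      (hpos p hp)

lemma forall_smul_mem_Ici_iff [ProperSpace F] {S : Set (F × ℝ)}
    (hS : ∀ p ∈ closure S, 0 < p.2 → p ∈ S) (hpos : ∀ p ∈ S, 0 < p.2) :
    (∀ p ∈ S, ∀ t ∈ Ici (1 : ℝ), t • p ∈ S) ↔
      ∀ p ∈ S, ∀ w ∈ normalConeP S p, iprod w p ≤ 0 := by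
  refine ⟨fun h p hp w hw => ?_, fun h p hp t ht => ?_⟩
  · exact iprod_nonpos_of_add_smul_mem hw fun s hs => by
      simpa [add_smul] using h p hp (1 + s) (by simp; linarith [hs.1])
  · exact smul_mem_of_forall_normalConeP hS (by linarith [mem_Ici.1 ht])
      (fun z hz w hw => mul_nonpos_of_nonneg_of_nonpos (by linarith [mem_Ici.1 ht]) (h z hz w hw))
      hp (hpos p hp)

lemma ENNReal.le_of_forall_pos_ofReal_le {a b : ℝ≥0∞}
    (h : ∀ c : ℝ, 0 < c → ENNReal.ofReal c ≤ a → ENNReal.ofReal c ≤ b) : a ≤ b := by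
  refine le_of_forall_lt fun d hd => ?_
  obtain ⟨c, -, hdc, hca⟩ := ENNReal.lt_iff_exists_real_btwn.1 hd
  exact hdc.trans_le (h c (ENNReal.ofReal_pos.1 (pos_of_gt hdc)) hca.le)

lemma ENNReal.le_of_forall_pos_le_ofReal {a b : ℝ≥0∞}
    (h : ∀ c : ℝ, 0 < c → b ≤ ENNReal.ofReal c → a ≤ ENNReal.ofReal c) : a ≤ b := by
  refine le_of_forall_gt fun d hd => ?_
  obtain ⟨c, -, hbc, hcd⟩ := ENNReal.lt_iff_exists_real_btwn.1 hd
  exact (h c (ENNReal.ofReal_pos.1 (pos_of_gt hbc)) hbc.le).trans_lt hcd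

variable {f : F → ℝ≥0∞}

lemma persp_one (y : F) : persp f y 1 = f y := by
  simp [persp]

lemma ofReal_le_persp_iff {y : F} {c v : ℝ} (hc : 0 < c) (hv : 0 < v) :
    ENNReal.ofReal c ≤ persp f y v ↔ v⁻¹ • (y, c) ∈ hypoSet f := by
  have hcv : ENNReal.ofReal c = ENNReal.ofReal v * ENNReal.ofReal (v⁻¹ * c) := by
    rw [← ENNReal.ofReal_mul hv.le, mul_inv_cancel_left₀ hv.ne']
  simp only [persp, hypoSet, Prod.smul_mk, smul_eq_mul, hcv,
    ENNReal.mul_le_mul_iff_right (ENNReal.ofReal_pos.2 hv).ne' ENNReal.ofReal_ne_top]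
  exact (and_iff_right (by positivity)).symm

lemma persp_le_ofReal_iff {y : F} {c v : ℝ} (hc : 0 < c) (hv : 0 < v) :
    persp f y v ≤ ENNReal.ofReal c ↔ v⁻¹ • (y, c) ∈ epiSet f := by
  have hcv : ENNReal.ofReal c = ENNReal.ofReal v * ENNReal.ofReal (v⁻¹ * c) := by
    rw [← ENNReal.ofReal_mul hv.le, mul_inv_cancel_left₀ hv.ne']
  simp only [persp, epiSet, Prod.smul_mk, smul_eq_mul, hcv,
    ENNReal.mul_le_mul_iff_right (ENNReal.ofReal_pos.2 hv).ne' ENNReal.ofReal_ne_top]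
  exact (and_iff_right (by positivity)).symm

lemma forall_monotoneOn_persp_iff_hypoSet :
    (∀ y, MonotoneOn (persp f y) (Ioi 0)) ↔
      ∀ p ∈ hypoSet f, ∀ t ∈ Ioc (0 : ℝ) 1, t • p ∈ hypoSet f := by
  refine ⟨fun h p hp t ht => ?_, fun h y v hv v' hv' hvv' => ?_⟩
  · have hpt : ENNReal.ofReal p.2 ≤ persp f p.1 t⁻¹ :=
      calc ENNReal.ofReal p.2 ≤ persp f p.1 1 := (persp_one p.1).symm ▸ hp.2
        _ ≤ persp f p.1 t⁻¹ :=
          h p.1 (mem_Ioi.2 one_pos) (inv_pos.2 ht.1) ((one_le_inv₀ ht.1).2 ht.2)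
    simpa using (ofReal_le_persp_iff hp.1 (inv_pos.2 ht.1)).1 hpt
  · refine ENNReal.le_of_forall_pos_ofReal_le fun c hc hcv => ?_
    have hv₀ : (0 : ℝ) < v := hv
    have hv'₀ : (0 : ℝ) < v' := hv'
    rw [ofReal_le_persp_iff hc hv'₀]
    have := h _ ((ofReal_le_persp_iff hc hv₀).1 hcv) (v / v')
      ⟨div_pos hv₀ hv'₀, (div_le_one hv'₀).2 hvv'⟩
    rwa [smul_smul, show v / v' * v⁻¹ = v'⁻¹ by field_simp] at this

lemma forall_monotoneOn_persp_iff_epiSet :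
    (∀ y, MonotoneOn (persp f y) (Ioi 0)) ↔
      ∀ p ∈ epiSet f, ∀ t ∈ Ici (1 : ℝ), t • p ∈ epiSet f := by
  refine ⟨fun h p hp t ht => ?_, fun h y v hv v' hv' hvv' => ?_⟩
  · have ht₀ : 0 < t := one_pos.trans_le ht
    have hpt : persp f p.1 t⁻¹ ≤ ENNReal.ofReal p.2 :=
      calc persp f p.1 t⁻¹ ≤ persp f p.1 1 :=
          h p.1 (inv_pos.2 ht₀) (mem_Ioi.2 one_pos) (inv_le_one_of_one_le₀ ht)
        _ ≤ ENNReal.ofReal p.2 := (persp_one p.1).symm ▸ hp.2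
    simpa using (persp_le_ofReal_iff hp.1 (inv_pos.2 ht₀)).1 hpt
  · refine ENNReal.le_of_forall_pos_le_ofReal fun c hc hcv => ?_
    have hv₀ : (0 : ℝ) < v := hv
    have hv'₀ : (0 : ℝ) < v' := hv'
    rw [persp_le_ofReal_iff hc hv₀]
    have := h _ ((persp_le_ofReal_iff hc hv'₀).1 hcv) (v' / v) ((one_le_div hv₀).2 hvv')
    rwa [smul_smul, show v' / v * v'⁻¹ = v⁻¹ by field_simp] at this

lemma upperSemicontinuousOn_persp (hS : ∀ p ∈ closure (hypoSet f), 0 < p.2 → p ∈ hypoSet f)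
    (y : F) : UpperSemicontinuousOn (persp f y) (Ioi 0) := by
  intro v (hv : 0 < v) u hu
  obtain ⟨c, -, hvc, hcu⟩ := ENNReal.lt_iff_exists_real_btwn.1 hu
  have hc : 0 < c := ENNReal.ofReal_pos.1 (pos_of_gt hvc)
  have hout : v⁻¹ • (y, c) ∉ hypoSet f := fun h => ((ofReal_le_persp_iff hc hv).2 h).not_gt hvc
  have hcont : ContinuousAt (fun v' : ℝ => v'⁻¹ • (y, c)) v :=
    (continuousAt_inv₀ hv.ne').smul continuousAt_const
  filter_upwards [nhdsWithin_le_nhds (hcont.eventually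
    (eventually_notMem_nhds hS (by simpa using mul_pos (inv_pos.2 hv) hc) hout)),
    self_mem_nhdsWithin] with v' hv'S (hv' : 0 < v')
  exact (not_le.1 fun h => hv'S ((ofReal_le_persp_iff hc hv').1 h)).trans hcu

lemma lowerSemicontinuousOn_persp (hS : ∀ p ∈ closure (epiSet f), 0 < p.2 → p ∈ epiSet f)
    (y : F) : LowerSemicontinuousOn (persp f y) (Ioi 0) := by
  intro v (hv : 0 < v) u hu
  obtain ⟨c, -, huc, hcv⟩ := ENNReal.lt_iff_exists_real_btwn.1 hu
  have hc : 0 < c := ENNReal.ofReal_pos.1 (pos_of_gt huc)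
  have hout : v⁻¹ • (y, c) ∉ epiSet f := fun h => ((persp_le_ofReal_iff hc hv).2 h).not_gt hcv
  have hcont : ContinuousAt (fun v' : ℝ => v'⁻¹ • (y, c)) v :=
    (continuousAt_inv₀ hv.ne').smul continuousAt_const
  filter_upwards [nhdsWithin_le_nhds (hcont.eventually
    (eventually_notMem_nhds hS (by simpa using mul_pos (inv_pos.2 hv) hc) hout)),
    self_mem_nhdsWithin] with v' hv'S (hv' : 0 < v')
  exact huc.trans (not_le.1 fun h => hv'S ((persp_le_ofReal_iff hc hv').1 h))

end

/-- An upper semicontinuous `f` is upper radial iff every proximal normal `(ζ,δ)` to `hypo f`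
at `(x,u)` has `⟨ζ,x⟩ + δu ≥ 0`; a lower semicontinuous `f` is lower radial iff every proximal
normal `(ζ,δ)` to `epi f` at `(x,u)` has `⟨ζ,x⟩ + δu ≤ 0`. -/
theorem semicontinuous_radial_characterization (f : E → ℝ≥0∞) :
    ((∀ p ∈ closure (hypoSet f), 0 < p.2 → p ∈ hypoSet f) →
      (UpperRadial f ↔
        ∀ p ∈ hypoSet f, ∀ w ∈ normalConeP (hypoSet f) p, 0 ≤ iprod w p)) ∧
    ((∀ p ∈ closure (epiSet f), 0 < p.2 → p ∈ epiSet f) →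
      (LowerRadial f ↔
        ∀ p ∈ epiSet f, ∀ w ∈ normalConeP (epiSet f) p, iprod w p ≤ 0)) := by
  refine ⟨fun hS => ?_, fun hS => ?_⟩
  · rw [← forall_smul_mem_Ioc_iff hS fun p hp => hp.1, ← forall_monotoneOn_persp_iff_hypoSet]
    exact forall_congr' fun y => and_iff_left (upperSemicontinuousOn_persp hS y)
  · rw [← forall_smul_mem_Ici_iff hS fun p hp => hp.1, ← forall_monotoneOn_persp_iff_epiSet]
    exact forall_congr' fun y => and_iff_left (lowerSemicontinuousOn_persp hS y)
end
end

section
/- If f : E → [0,∞] is quasiconcave, then f^Γ is quasiconvex; if in addition for every y ∈ E the map v ↦ f^p(y,v) is nondecreasing on ℝ₊₊, then f_Γ is also quasiconvex. Likewise, if f is quasiconvex, then f_Γ is quasiconcave; if in addition v ↦ f^p(y,v) is nondecreasing for every y, then f^Γ is also quasiconcave. -/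
open Set
open scoped ENNReal RealInnerProductSpace

noncomputable section

variable {E : Type*} [NormedAddCommGroup E] [InnerProductSpace ℝ E] [FiniteDimensional ℝ E]

/-- The upper radial transformation `f^Γ(y) = sup{v > 0 : v·f(y/v) ≤ 1}` (`sup ∅ = 0`). -/
def radSup (f : E → ℝ≥0∞) (y : E) : ℝ≥0∞ :=
  ⨆ (v : ℝ) (_ : 0 < v) (_ : persp f y v ≤ 1), ENNReal.ofReal v

/-- The lower radial transformation `f_Γ(y) = inf{v > 0 : v·f(y/v) ≥ 1}` (`inf ∅ = ∞`). -/
def radInf (f : E → ℝ≥0∞) (y : E) : ℝ≥0∞ :=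
  ⨅ (v : ℝ) (_ : 0 < v) (_ : 1 ≤ persp f y v), ENNReal.ofReal v

/-- `f` is quasiconcave: superlevel sets `{x : f(x) ≥ z}` are convex for all `z > 0`. -/
def QuasiconcaveFun (f : E → ℝ≥0∞) : Prop :=
  ∀ z : ℝ, 0 < z → Convex ℝ {x : E | ENNReal.ofReal z ≤ f x}

/-- `f` is quasiconvex: sublevel sets `{x : f(x) ≤ z}` are convex for all `z > 0`. -/
def QuasiconvexFun (f : E → ℝ≥0∞) : Prop :=
  ∀ z : ℝ, 0 < z → Convex ℝ {x : E | f x ≤ ENNReal.ofReal z}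

/-!
For `z ≥ 0`, `f^Γ(y) ≤ z` holds iff `v·f(y/v) > 1`, i.e. `f(y/v) > 1/v`, for every `v > z`. So the
sublevel set `{f^Γ ≤ z}` is the intersection over `v > z` of the preimages of the strict
superlevel sets `{f > 1/v}` under the linear maps `y ↦ y/v`, and these are convex when `f` is
quasiconcave. The superlevel sets `{f_Γ ≥ z}` are treated in the same way. For `{f_Γ ≤ z}` and
`{f^Γ ≥ z}` the defining infimum or supremum is only approached, by some admissible `w` near `v`;
monotonicity of `v ↦ v·f(y/v)` transfers the defining inequality from `w` to `v`, giving the same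
kind of description with non-strict level sets of `f`.
-/

lemma convex_setOf_forall_inv_smul_mem {F : Type*} [AddCommGroup F] [Module ℝ F] {I : Set ℝ}
    {s : ℝ → Set F} (hs : ∀ v ∈ I, Convex ℝ (s v)) :
    Convex ℝ {y : F | ∀ v ∈ I, v⁻¹ • y ∈ s v} := by
  have h : {y : F | ∀ v ∈ I, v⁻¹ • y ∈ s v} = ⋂ v ∈ I, (v⁻¹ • ·) ⁻¹' s v := by ext; simp
  exact h ▸ convex_iInter₂ fun v hv => (hs v hv).smul_preimage v⁻¹

section Radial

variable {V : Type*} [NormedAddCommGroup V] [InnerProductSpace ℝ V] {f : V → ℝ≥0∞} {y : V}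
  {v z : ℝ}

lemma ofReal_mul_ofReal_inv (hv : 0 < v) : ENNReal.ofReal v * ENNReal.ofReal v⁻¹ = 1 := by
  rw [← ENNReal.ofReal_mul hv.le, mul_inv_cancel₀ hv.ne', ENNReal.ofReal_one]

lemma persp_le_one_iff (hv : 0 < v) : persp f y v ≤ 1 ↔ f (v⁻¹ • y) ≤ ENNReal.ofReal v⁻¹ := by
  rw [persp, ← ofReal_mul_ofReal_inv hv]
  exact ENNReal.mul_le_mul_iff_right (ENNReal.ofReal_pos.2 hv).ne' ENNReal.ofReal_ne_top

lemma one_le_persp_iff (hv : 0 < v) : 1 ≤ persp f y v ↔ ENNReal.ofReal v⁻¹ ≤ f (v⁻¹ • y) := by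
  rw [persp, ← ofReal_mul_ofReal_inv hv]
  exact ENNReal.mul_le_mul_iff_right (ENNReal.ofReal_pos.2 hv).ne' ENNReal.ofReal_ne_top

lemma persp_lt_one_iff (hv : 0 < v) : persp f y v < 1 ↔ f (v⁻¹ • y) < ENNReal.ofReal v⁻¹ := by
  simpa only [not_le] using (one_le_persp_iff hv).not

lemma one_lt_persp_iff (hv : 0 < v) : 1 < persp f y v ↔ ENNReal.ofReal v⁻¹ < f (v⁻¹ • y) := by
  simpa only [not_le] using (persp_le_one_iff hv).not

lemma radSup_le_ofReal_iff (hz : 0 ≤ z) :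
    radSup f y ≤ ENNReal.ofReal z ↔ ∀ v ∈ Ioi z, ENNReal.ofReal v⁻¹ < f (v⁻¹ • y) := by
  simp only [radSup, iSup_le_iff, ENNReal.ofReal_le_ofReal_iff hz, mem_Ioi]
  refine forall_congr' fun v => ⟨fun h hzv => ?_, fun h hv hle => ?_⟩
  · have hv : 0 < v := hz.trans_lt hzv
    exact (one_lt_persp_iff hv).1 (not_le.1 fun hle => hzv.not_ge (h hv hle))
  · exact not_lt.1 fun hzv => ((one_lt_persp_iff hv).2 (h hzv)).not_ge hle

lemma ofReal_le_radInf_iff :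
    ENNReal.ofReal z ≤ radInf f y ↔ ∀ v ∈ Ioo 0 z, f (v⁻¹ • y) < ENNReal.ofReal v⁻¹ := by
  simp only [radInf, le_iInf_iff, mem_Ioo, and_imp]
  refine forall_congr' fun v => forall_congr' fun hv => ?_
  rw [ENNReal.ofReal_le_ofReal_iff hv.le, ← persp_lt_one_iff hv]
  exact ⟨fun h hvz => not_le.1 fun h1 => hvz.not_ge (h h1),
    fun h h1 => not_lt.1 fun hvz => (h hvz).not_ge h1⟩

lemma radInf_le_ofReal_iff (hm : MonotoneOn (persp f y) (Ioi 0)) (hz : 0 ≤ z) :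
    radInf f y ≤ ENNReal.ofReal z ↔ ∀ v ∈ Ioi z, ENNReal.ofReal v⁻¹ ≤ f (v⁻¹ • y) := by
  constructor
  · intro h v hzv
    have hv : 0 < v := hz.trans_lt hzv
    have hlt : radInf f y < ENNReal.ofReal v :=
      h.trans_lt ((ENNReal.ofReal_lt_ofReal_iff hv).2 hzv)
    simp only [radInf, iInf_lt_iff] at hlt
    obtain ⟨w, hw, hpw, hwv⟩ := hlt
    exact (one_le_persp_iff hv).1 <|
      hpw.trans (hm hw hv ((ENNReal.ofReal_lt_ofReal_iff hv).1 hwv).le)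
  · intro h
    refine le_of_forall_gt_imp_ge_of_dense fun c hzc => ?_
    obtain ⟨r, -, hzr, hrc⟩ := ENNReal.lt_iff_exists_real_btwn.1 hzc
    replace hzr : z < r := (ENNReal.ofReal_lt_ofReal_iff'.1 hzr).1
    have hr : 0 < r := hz.trans_lt hzr
    exact (iInf₂_le_of_le r hr (iInf_le_of_le ((one_le_persp_iff hr).2 (h r hzr)) le_rfl)).trans
      hrc.le

lemma ofReal_le_radSup_iff (hm : MonotoneOn (persp f y) (Ioi 0)) :
    ENNReal.ofReal z ≤ radSup f y ↔ ∀ v ∈ Ioo 0 z, f (v⁻¹ • y) ≤ ENNReal.ofReal v⁻¹ := by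
  constructor
  · rintro h v ⟨hv, hvz⟩
    have hlt : ENNReal.ofReal v < radSup f y :=
      (ENNReal.ofReal_lt_ofReal_iff'.2 ⟨hvz, hv.trans hvz⟩).trans_le h
    simp only [radSup, lt_iSup_iff] at hlt
    obtain ⟨w, hw, hpw, hvw⟩ := hlt
    exact (persp_le_one_iff hv).1 <|
      (hm hv hw ((ENNReal.ofReal_lt_ofReal_iff hw).1 hvw).le).trans hpw
  · intro h
    refine le_of_forall_lt_imp_le_of_dense fun c hcz => ?_
    obtain ⟨r, -, hcr, hrz⟩ := ENNReal.lt_iff_exists_real_btwn.1 hcz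
    have hr : 0 < r := ENNReal.ofReal_pos.1 (pos_of_gt hcr)
    replace hrz : r < z := (ENNReal.ofReal_lt_ofReal_iff'.1 hrz).1
    exact hcr.le.trans <| le_iSup₂_of_le r hr <|
      le_iSup_of_le ((persp_le_one_iff hr).2 (h r ⟨hr, hrz⟩)) le_rfl

lemma QuasiconcaveFun.convex_gt (hf : QuasiconcaveFun f) (c : ℝ≥0∞) :
    Convex ℝ {x | c < f x} := by
  intro x₁ h₁ x₂ h₂ a b ha hb hab
  obtain ⟨r, -, hcr, hr⟩ := ENNReal.lt_iff_exists_real_btwn.1 (lt_min h₁ h₂)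
  exact hcr.trans_le <| hf r (ENNReal.ofReal_pos.1 (pos_of_gt hcr))
    (hr.le.trans (min_le_left _ _)) (hr.le.trans (min_le_right _ _)) ha hb hab

lemma QuasiconvexFun.convex_lt (hf : QuasiconvexFun f) (c : ℝ≥0∞) :
    Convex ℝ {x | f x < c} := by
  intro x₁ h₁ x₂ h₂ a b ha hb hab
  obtain ⟨r, -, hr, hrc⟩ := ENNReal.lt_iff_exists_real_btwn.1 (max_lt h₁ h₂)
  exact (hf r (ENNReal.ofReal_pos.1 (pos_of_gt hr))
    ((le_max_left _ _).trans hr.le) ((le_max_right _ _).trans hr.le) ha hb hab).trans_lt hrc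

lemma QuasiconcaveFun.quasiconvexFun_radSup (hf : QuasiconcaveFun f) :
    QuasiconvexFun (radSup f) := fun z hz => by
  simpa only [radSup_le_ofReal_iff hz.le, mem_ofPred_eq] using
    convex_setOf_forall_inv_smul_mem fun v _ => hf.convex_gt (ENNReal.ofReal v⁻¹)

lemma QuasiconcaveFun.quasiconvexFun_radInf (hf : QuasiconcaveFun f)
    (hm : ∀ y, MonotoneOn (persp f y) (Ioi 0)) : QuasiconvexFun (radInf f) := fun z hz => by
  simpa only [radInf_le_ofReal_iff (hm _) hz.le, mem_ofPred_eq] using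
    convex_setOf_forall_inv_smul_mem fun v (hv : v ∈ Ioi z) => hf v⁻¹ (inv_pos.2 (hz.trans hv))

lemma QuasiconvexFun.quasiconcaveFun_radInf (hf : QuasiconvexFun f) :
    QuasiconcaveFun (radInf f) := fun z _ => by
  simpa only [ofReal_le_radInf_iff, mem_ofPred_eq] using
    convex_setOf_forall_inv_smul_mem fun v _ => hf.convex_lt (ENNReal.ofReal v⁻¹)

lemma QuasiconvexFun.quasiconcaveFun_radSup (hf : QuasiconvexFun f)
    (hm : ∀ y, MonotoneOn (persp f y) (Ioi 0)) : QuasiconcaveFun (radSup f) := fun z _ => by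
  simpa only [ofReal_le_radSup_iff (hm _), mem_ofPred_eq] using
    convex_setOf_forall_inv_smul_mem fun v hv => hf v⁻¹ (inv_pos.2 hv.1)

end Radial

/-- If `f` is quasiconcave then `f^Γ` is quasiconvex (and `f_Γ` as well when every
`f^p(y,·)` is nondecreasing); if `f` is quasiconvex then `f_Γ` is quasiconcave (and `f^Γ`
as well when every `f^p(y,·)` is nondecreasing). -/
theorem radial_quasiconvexity (f : E → ℝ≥0∞) :
    (QuasiconcaveFun f →
      QuasiconvexFun (radSup f) ∧
      ((∀ y : E, MonotoneOn (persp f y) (Ioi (0 : ℝ))) → QuasiconvexFun (radInf f))) ∧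
    (QuasiconvexFun f →
      QuasiconcaveFun (radInf f) ∧
      ((∀ y : E, MonotoneOn (persp f y) (Ioi (0 : ℝ))) → QuasiconcaveFun (radSup f))) :=
  ⟨fun hf => ⟨hf.quasiconvexFun_radSup, hf.quasiconvexFun_radInf⟩,
    fun hf => ⟨hf.quasiconcaveFun_radInf, hf.quasiconcaveFun_radSup⟩⟩
end
end
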